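/- Let S_1, ..., S_n, S be n+1 exchangeable real-valued random variables with almost surely distinct values. Then the rank of S among the n+1 values is uniformly distributed on {1, ..., n+1}, and consequently P[S ≤ S_{(⌈(1−α)(n+1)⌉)}] = ⌈(1−α)(n+1)⌉/(n+1) ≥ 1 − α, where S_{(k)} denotes the k-th order statistic of the n+1 values. -/

import Mathlib

open MeasureTheory
open scoped ENNReal

/-- The `k`-th order statistic of the `m` values `f 0, …, f (m-1)`:
`inf { t : #{i : f i ≤ t} ≥ k }`. -/
noncomputable def orderStat (m : ℕ) (f : Fin m → ℝ) (k : ℕ) : ℝ :=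
  sInf {t : ℝ | k ≤ Set.ncard {i : Fin m | f i ≤ t}}

open scoped Classical

namespace ConfAux

variable {m : ℕ}

noncomputable def rk (x : Fin m → ℝ) (j : Fin m) : ℕ := Set.ncard {i | x i ≤ x j}

lemma cnt_eq_card (x : Fin m → ℝ) (t : ℝ) :
    Set.ncard {i | x i ≤ t} = (Finset.univ.filter fun i => x i ≤ t).card := by
  rw [← Set.ncard_coe_finset]; congr 1; ext i; simp

lemma rk_eq_card (x : Fin m → ℝ) (j : Fin m) :
    rk x j = (Finset.univ.filter fun i => x i ≤ x j).card := cnt_eq_card x (x j)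

lemma one_le_rk (x : Fin m → ℝ) (j : Fin m) : 1 ≤ rk x j := by
  rw [rk_eq_card]
  exact Finset.card_pos.mpr ⟨j, Finset.mem_filter.mpr ⟨Finset.mem_univ j, le_refl _⟩⟩

lemma rk_le (x : Fin m → ℝ) (j : Fin m) : rk x j ≤ m := by
  rw [rk_eq_card]
  exact (Finset.card_filter_le Finset.univ _).trans (by simp)

lemma rk_le_rk {x : Fin m → ℝ} {j j' : Fin m} (h : x j ≤ x j') : rk x j ≤ rk x j' := by
  rw [rk_eq_card, rk_eq_card]
  apply Finset.card_le_card
  intro i hi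
  simp only [Finset.mem_filter, Finset.mem_univ, true_and] at *
  exact hi.trans h

lemma rk_lt_rk {x : Fin m → ℝ} {j j' : Fin m} (h : x j < x j') : rk x j < rk x j' := by
  rw [rk_eq_card, rk_eq_card]
  apply Finset.card_lt_card
  constructor
  · intro i hi
    simp only [Finset.mem_filter, Finset.mem_univ, true_and] at *
    exact hi.trans h.le
  · intro hsub
    have := hsub (Finset.mem_filter.mpr ⟨Finset.mem_univ j', le_refl _⟩)
    simp only [Finset.mem_filter, Finset.mem_univ, true_and] at this
    exact absurd this (not_le.mpr h)

lemma rk_le_iff {x : Fin m → ℝ} {j j' : Fin m} : rk x j ≤ rk x j' ↔ x j ≤ x j' := by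
  constructor
  · intro h
    by_contra hc
    exact absurd (rk_lt_rk (not_le.mp hc)) (not_lt.mpr h)
  · exact rk_le_rk

lemma rk_injective {x : Fin m → ℝ} (hx : Function.Injective x) :
    Function.Injective (rk x) := by
  intro j j' h
  apply hx
  exact le_antisymm (rk_le_iff.mp h.le) (rk_le_iff.mp h.ge)

lemma exists_rk_eq {x : Fin m → ℝ} (hx : Function.Injective x) {r : ℕ}
    (h1 : 1 ≤ r) (hm : r ≤ m) : ∃ j, rk x j = r := by
  have hsub : Finset.univ.image (rk x) ⊆ Finset.Icc 1 m := by
    intro r hr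
    simp only [Finset.mem_image] at hr
    obtain ⟨j, _, rfl⟩ := hr
    exact Finset.mem_Icc.mpr ⟨one_le_rk x j, rk_le x j⟩
  have hcard : (Finset.Icc 1 m).card ≤ (Finset.univ.image (rk x)).card := by
    rw [Finset.card_image_of_injective _ (rk_injective hx)]
    simp [Nat.card_Icc]
  have := Finset.eq_of_subset_of_card_le hsub hcard
  have hr : r ∈ Finset.univ.image (rk x) := by
    rw [this]; exact Finset.mem_Icc.mpr ⟨h1, hm⟩
  simpa using hr


lemma rk_comp (σ : Equiv.Perm (Fin m)) (x : Fin m → ℝ) (j : Fin m) :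
    rk (x ∘ σ) j = rk x (σ j) := by
  unfold rk
  have h : {i | (x ∘ σ) i ≤ (x ∘ σ) j} = ⇑σ ⁻¹' {i | x i ≤ x (σ j)} := rfl
  rw [h, ← Equiv.image_symm_eq_preimage, Set.ncard_image_of_injective _ σ.symm.injective]

lemma orderStat_eq {x : Fin m → ℝ} (hx : Function.Injective x) {k : ℕ}
    (h1 : 1 ≤ k) (hm : k ≤ m) {j₀ : Fin m} (hj₀ : rk x j₀ = k) :
    orderStat m x k = x j₀ := by
  have hmem : x j₀ ∈ {t : ℝ | k ≤ Set.ncard {i : Fin m | x i ≤ t}} := by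
    simp only [Set.mem_setOf_eq]
    exact hj₀.ge
  have hlb : ∀ t ∈ {t : ℝ | k ≤ Set.ncard {i : Fin m | x i ≤ t}}, x j₀ ≤ t := by
    intro t ht
    by_contra hc
    push_neg at hc
    simp only [Set.mem_setOf_eq, cnt_eq_card] at ht
    have hsub : (Finset.univ.filter fun i => x i ≤ t) ⊆
        (Finset.univ.filter fun i => x i ≤ x j₀).erase j₀ := by
      intro i hi
      simp only [Finset.mem_filter, Finset.mem_univ, true_and] at hi
      refine Finset.mem_erase.mpr ⟨?_, Finset.mem_filter.mpr ⟨Finset.mem_univ i, hi.trans hc.le⟩⟩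
      rintro rfl
      exact absurd hi (not_le.mpr hc)
    have hcard := Finset.card_le_card hsub
    have hj₀mem : j₀ ∈ Finset.univ.filter (fun i => x i ≤ x j₀) :=
      Finset.mem_filter.mpr ⟨Finset.mem_univ j₀, le_refl _⟩
    rw [Finset.card_erase_of_mem hj₀mem, ← rk_eq_card, hj₀] at hcard
    omega
  exact le_antisymm (csInf_le ⟨x j₀, hlb⟩ hmem) (le_csInf ⟨x j₀, hmem⟩ hlb)

lemma le_orderStat_iff {x : Fin m → ℝ} (hx : Function.Injective x) {k : ℕ}
    (h1 : 1 ≤ k) (hm : k ≤ m) (j : Fin m) :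
    x j ≤ orderStat m x k ↔ rk x j ≤ k := by
  obtain ⟨j₀, hj₀⟩ := exists_rk_eq hx h1 hm
  rw [orderStat_eq hx h1 hm hj₀, ← hj₀, ← rk_le_iff]

lemma measurable_rk (j : Fin m) : Measurable fun x : Fin m → ℝ => rk x j := by
  simp only [rk_eq_card, Finset.card_filter]
  exact Finset.measurable_sum _ fun i _ =>
    Measurable.ite (measurableSet_le (measurable_pi_apply i) (measurable_pi_apply j))
      measurable_const measurable_const

lemma measurableSet_inj : MeasurableSet {x : Fin m → ℝ | Function.Injective x} := by
  have h : {x : Fin m → ℝ | Function.Injective x}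
      = ⋂ (i) (j) (_ : i ≠ j), {x : Fin m → ℝ | x i ≠ x j} := by
    ext x
    simp only [Set.mem_setOf_eq, Set.mem_iInter, Function.Injective]
    constructor
    · intro h i j hij hx
      exact hij (h hx)
    · intro h i j hx
      by_contra hij
      exact h i j hij hx
  rw [h]
  exact MeasurableSet.iInter fun i => MeasurableSet.iInter fun j => MeasurableSet.iInter
    fun _ => (measurableSet_eq_fun (measurable_pi_apply i) (measurable_pi_apply j)).compl

end ConfAux

/-- For exchangeable a.s.-distinct `S_1, …, S_n, S`, the rank of `S` among the `n+1` values
is uniform on `{1, …, n+1}`, and consequently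
`P[S ≤ S_{(⌈(1-α)(n+1)⌉)}] = ⌈(1-α)(n+1)⌉/(n+1) ≥ 1-α`. -/
theorem stmt2 {Ω : Type*} [MeasurableSpace Ω] (P : Measure Ω) [IsProbabilityMeasure P]
    (n : ℕ) (S : Fin (n + 1) → Ω → ℝ) (hS : ∀ i, Measurable (S i))
    (hexch : ∀ σ : Equiv.Perm (Fin (n + 1)),
      P.map (fun ω i => S (σ i) ω) = P.map (fun ω i => S i ω))
    (hdistinct : ∀ᵐ ω ∂P, Function.Injective fun i => S i ω)
    (α : ℝ) (hα : α ∈ Set.Ioo (0 : ℝ) 1) :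
    (∀ k : Fin (n + 1),
        P {ω | Set.ncard {i : Fin (n + 1) | S i ω ≤ S (Fin.last n) ω} = (k : ℕ) + 1}
          = ((n : ℝ≥0∞) + 1)⁻¹) ∧
    P {ω | S (Fin.last n) ω ≤
        orderStat (n + 1) (fun i => S i ω) ⌈(1 - α) * ((n : ℝ) + 1)⌉₊}
      = ENNReal.ofReal ((⌈(1 - α) * ((n : ℝ) + 1)⌉₊ : ℝ) / ((n : ℝ) + 1)) ∧
    1 - α ≤ (⌈(1 - α) * ((n : ℝ) + 1)⌉₊ : ℝ) / ((n : ℝ) + 1) := by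
  obtain ⟨hα0, hα1⟩ := hα
  have hmeas : Measurable fun ω i => S i ω := measurable_pi_lambda _ hS
  set μ : Measure (Fin (n + 1) → ℝ) := P.map (fun ω i => S i ω) with hμ
  have hprob : IsProbabilityMeasure μ := Measure.isProbabilityMeasure_map hmeas.aemeasurable
  -- invariance of μ under coordinate permutations
  have hinv : ∀ σ : Equiv.Perm (Fin (n + 1)), μ.map (fun x => x ∘ σ) = μ := by
    intro σ
    have hc : Measurable fun x : Fin (n + 1) → ℝ => x ∘ σ :=
      measurable_pi_lambda _ fun i => measurable_pi_apply (σ i)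
    rw [hμ, Measure.map_map hc hmeas]
    exact hexch σ
  -- injectivity set
  set Inj : Set (Fin (n + 1) → ℝ) := {x | Function.Injective x} with hInj
  have hinjmeas : MeasurableSet Inj := ConfAux.measurableSet_inj
  have hnull : μ Injᶜ = 0 := by
    rw [hμ, Measure.map_apply hmeas hinjmeas.compl]
    have h := hdistinct
    rw [ae_iff] at h
    convert h using 2
    rfl
  have hInj1 : μ Inj = 1 := by
    have h := measure_add_measure_compl (μ := μ) hinjmeas
    rwa [hnull, add_zero, measure_univ] at h
  -- measurability of rank level sets
  have hmrk : ∀ (j : Fin (n + 1)) (r : ℕ),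
      MeasurableSet {x : Fin (n + 1) → ℝ | ConfAux.rk x j = r} := fun j r =>
    ConfAux.measurable_rk j (measurableSet_singleton r)
  -- all coordinates have the same rank distribution
  have hsame : ∀ (j : Fin (n + 1)) (r : ℕ),
      μ {x | ConfAux.rk x j = r} = μ {x | ConfAux.rk x (Fin.last n) = r} := by
    intro j r
    have hσ := hinv (Equiv.swap j (Fin.last n))
    have hc : Measurable fun x : Fin (n + 1) → ℝ => x ∘ (Equiv.swap j (Fin.last n)) :=
      measurable_pi_lambda _ fun i => measurable_pi_apply _
    have key : μ {x | ConfAux.rk x (Fin.last n) = r} = μ {x | ConfAux.rk x j = r} := by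
      calc μ {x | ConfAux.rk x (Fin.last n) = r}
        = (μ.map (fun x => x ∘ (Equiv.swap j (Fin.last n))))
            {x | ConfAux.rk x (Fin.last n) = r} := by rw [hσ]
      _ = μ ((fun x : Fin (n + 1) → ℝ => x ∘ (Equiv.swap j (Fin.last n))) ⁻¹'
            {x | ConfAux.rk x (Fin.last n) = r}) := Measure.map_apply hc (hmrk _ r)
      _ = μ {x | ConfAux.rk x j = r} := by
          congr 1
          ext x
          simp only [Set.mem_preimage, Set.mem_setOf_eq, ConfAux.rk_comp,
            Equiv.swap_apply_right]
    exact key.symm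
  -- uniformity
  have huni : ∀ r : ℕ, 1 ≤ r → r ≤ n + 1 →
      μ {x | ConfAux.rk x (Fin.last n) = r} = ((n : ℝ≥0∞) + 1)⁻¹ := by
    intro r h1 hm
    set A : Fin (n + 1) → Set (Fin (n + 1) → ℝ) :=
      fun j => {x | ConfAux.rk x j = r} ∩ Inj with hA
    have hAmeas : ∀ j, MeasurableSet (A j) := fun j => (hmrk j r).inter hinjmeas
    have hdisj : Pairwise (Function.onFun Disjoint A) := by
      intro j j' hjj'
      rw [Function.onFun, Set.disjoint_left]
      rintro x ⟨hx1, hx2⟩ ⟨hx1', _⟩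
      exact hjj' (ConfAux.rk_injective hx2 (hx1.trans hx1'.symm))
    have hcover : Inj ⊆ ⋃ j, A j := by
      intro x hx
      obtain ⟨j, hj⟩ := ConfAux.exists_rk_eq hx h1 hm
      exact Set.mem_iUnion.mpr ⟨j, ⟨hj, hx⟩⟩
    have hAeq : ∀ j, μ (A j) = μ {x | ConfAux.rk x j = r} := by
      intro j
      refine le_antisymm (measure_mono Set.inter_subset_left) ?_
      calc μ {x | ConfAux.rk x j = r}
          ≤ μ (A j ∪ Injᶜ) := measure_mono (fun x hx => by
            by_cases hxi : x ∈ Inj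
            · exact Or.inl ⟨hx, hxi⟩
            · exact Or.inr hxi)
        _ ≤ μ (A j) + μ Injᶜ := measure_union_le _ _
        _ = μ (A j) := by rw [hnull, add_zero]
    have hsum : ∑ j : Fin (n + 1), μ (A j) = 1 := by
      rw [← tsum_fintype (L := SummationFilter.unconditional _), ← measure_iUnion hdisj hAmeas]
      refine le_antisymm prob_le_one ?_
      calc (1 : ℝ≥0∞) = μ Inj := hInj1.symm
        _ ≤ μ (⋃ j, A j) := measure_mono hcover
    have hconst : ∀ j, μ (A j) = μ {x | ConfAux.rk x (Fin.last n) = r} := fun j =>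
      (hAeq j).trans (hsame j r)
    rw [Finset.sum_congr rfl (fun j _ => hconst j), Finset.sum_const, Finset.card_univ,
      Fintype.card_fin, nsmul_eq_mul] at hsum
    have hne : ((n : ℝ≥0∞) + 1) ≠ 0 := by simp
    have hnt : ((n : ℝ≥0∞) + 1) ≠ ⊤ := by simp
    have hcast : ((n + 1 : ℕ) : ℝ≥0∞) = (n : ℝ≥0∞) + 1 := by push_cast; ring
    rw [hcast] at hsum
    calc μ {x | ConfAux.rk x (Fin.last n) = r}
        = ((n : ℝ≥0∞) + 1)⁻¹ * (((n : ℝ≥0∞) + 1) * μ {x | ConfAux.rk x (Fin.last n) = r}) := by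
          rw [← mul_assoc, ENNReal.inv_mul_cancel hne hnt, one_mul]
      _ = ((n : ℝ≥0∞) + 1)⁻¹ := by rw [hsum, mul_one]
  -- Part 1
  have part1 : ∀ k : Fin (n + 1),
      P {ω | Set.ncard {i : Fin (n + 1) | S i ω ≤ S (Fin.last n) ω} = (k : ℕ) + 1}
        = ((n : ℝ≥0∞) + 1)⁻¹ := by
    intro k
    have hset : {ω | Set.ncard {i : Fin (n + 1) | S i ω ≤ S (Fin.last n) ω} = (k : ℕ) + 1}
        = (fun ω i => S i ω) ⁻¹' {x | ConfAux.rk x (Fin.last n) = (k : ℕ) + 1} := rfl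
    rw [hset, ← Measure.map_apply hmeas (hmrk _ _), ← hμ]
    have hk := k.isLt
    exact huni ((k : ℕ) + 1) (by omega) (by omega)
  refine ⟨part1, ?_, ?_⟩
  · -- Part 2
    set K : ℕ := ⌈(1 - α) * ((n : ℝ) + 1)⌉₊ with hK
    have hpos : (0 : ℝ) < (1 - α) * ((n : ℝ) + 1) := by
      apply mul_pos (by linarith) (by positivity)
    have hK1 : 1 ≤ K := Nat.one_le_iff_ne_zero.mpr (Nat.ceil_pos.mpr hpos).ne'
    have hKm : K ≤ n + 1 := by
      rw [hK, Nat.ceil_le]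
      push_cast
      nlinarith
    have haeeq : {ω | S (Fin.last n) ω ≤ orderStat (n + 1) (fun i => S i ω) K}
        =ᵐ[P] {ω | ConfAux.rk (fun i => S i ω) (Fin.last n) ≤ K} := by
      rw [Filter.eventuallyEq_set]
      filter_upwards [hdistinct] with ω hω
      exact ConfAux.le_orderStat_iff hω hK1 hKm (Fin.last n)
    rw [measure_congr haeeq]
    have hset : {ω | ConfAux.rk (fun i => S i ω) (Fin.last n) ≤ K}
        = (fun ω i => S i ω) ⁻¹' {x | ConfAux.rk x (Fin.last n) ≤ K} := rfl
    have hmle : MeasurableSet {x : Fin (n + 1) → ℝ | ConfAux.rk x (Fin.last n) ≤ K} :=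
      ConfAux.measurable_rk (Fin.last n) (measurableSet_Iic (α := ℕ))
    rw [hset, ← Measure.map_apply hmeas hmle, ← hμ]
    have hunion : {x : Fin (n + 1) → ℝ | ConfAux.rk x (Fin.last n) ≤ K}
        = ⋃ r ∈ Finset.Icc 1 K, {x | ConfAux.rk x (Fin.last n) = r} := by
      ext x
      simp only [Set.mem_setOf_eq, Set.mem_iUnion, Finset.mem_Icc]
      constructor
      · intro h
        exact ⟨ConfAux.rk x (Fin.last n), ⟨ConfAux.one_le_rk x _, h⟩, rfl⟩
      · rintro ⟨r, ⟨_, hr⟩, rfl⟩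
        exact hr
    rw [hunion, measure_biUnion_finset ?_ (fun r _ => hmrk _ r)]
    · have hsum : ∑ r ∈ Finset.Icc 1 K, μ {x | ConfAux.rk x (Fin.last n) = r}
          = ∑ _r ∈ Finset.Icc 1 K, ((n : ℝ≥0∞) + 1)⁻¹ := by
        refine Finset.sum_congr rfl fun r hr => ?_
        rw [Finset.mem_Icc] at hr
        exact huni r hr.1 (hr.2.trans hKm)
      rw [hsum, Finset.sum_const, Nat.card_Icc, nsmul_eq_mul]
      have : (K + 1 - 1 : ℕ) = K := by omega
      rw [this]
      rw [ENNReal.ofReal_div_of_pos (by positivity)]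
      have h1 : ENNReal.ofReal ((K : ℝ)) = (K : ℝ≥0∞) := ENNReal.ofReal_natCast K
      have h2 : ENNReal.ofReal ((n : ℝ) + 1) = (n : ℝ≥0∞) + 1 := by
        rw [show ((n : ℝ) + 1) = ((n + 1 : ℕ) : ℝ) by push_cast; ring,
          ENNReal.ofReal_natCast]
        push_cast; ring
      rw [h1, h2, ENNReal.div_eq_inv_mul, mul_comm]
    · intro r hr r' hr' hrr'
      rw [Function.onFun, Set.disjoint_left]
      rintro x hx hx'
      exact hrr' (hx.symm.trans hx')
  · -- Part 3
    rw [le_div_iff₀ (by positivity)]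
    exact Nat.le_ceil _
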